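/- Jacobi operator acting on the real and imaginary parts of the Hopf field (equation (3.3)): suppose the conformal minimal immersion f : ℂ → S^n satisfies ⟨Ω, Ω⟩ ≡ a for a real constant a, and write Ω = Ω₁ + i Ω₂ with Ω₁, Ω₂ : ℂ → ℝ^{n+1} the componentwise real and imaginary parts. Then pointwise 𝓛(Ω₁) = 2 (1 + 4 e^{−4ρ} (|Ω₁|² − |Ω₂|²)) Ω₁ and 𝓛(Ω₂) = 2 (1 − 4 e^{−4ρ} (|Ω₁|² − |Ω₂|²)) Ω₂. -/

import Mathlib

open Complex

noncomputable section

/-- Wirtinger derivative `∂_z` of a map `ℂ → ℂ`. -/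
def wirtZ (g : ℂ → ℂ) (z : ℂ) : ℂ :=
  (1 / 2 : ℂ) * (fderiv ℝ g z 1 - Complex.I * fderiv ℝ g z Complex.I)

/-- Wirtinger derivative `∂_z̄` of a map `ℂ → ℂ`. -/
def wirtZbar (g : ℂ → ℂ) (z : ℂ) : ℂ :=
  (1 / 2 : ℂ) * (fderiv ℝ g z 1 + Complex.I * fderiv ℝ g z Complex.I)

/-- Componentwise `∂_z` for vector-valued maps. -/
def WZ {m : ℕ} (g : ℂ → Fin m → ℂ) : ℂ → Fin m → ℂ :=
  fun z i => wirtZ (fun w => g w i) z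

/-- Componentwise `∂_z̄` for vector-valued maps. -/
def WZb {m : ℕ} (g : ℂ → Fin m → ℂ) : ℂ → Fin m → ℂ :=
  fun z i => wirtZbar (fun w => g w i) z

/-- Complex-bilinear (non-conjugating) pairing. -/
def pairC {m : ℕ} (u v : Fin m → ℂ) : ℂ := ∑ i, u i * v i

/-- Componentwise complex conjugation. -/
def conjV {m : ℕ} (u : Fin m → ℂ) : Fin m → ℂ := fun i => (starRingEnd ℂ) (u i)

/-- Complexification of a real vector. -/
def cV {m : ℕ} (u : Fin m → ℝ) : Fin m → ℂ := fun i => (u i : ℂ)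

/-- Complexification of a real-vector-valued map. -/
def Fc {m : ℕ} (f : ℂ → Fin m → ℝ) : ℂ → Fin m → ℂ := fun z => cV (f z)

/-- `∂_z` of (the complexification of) a real-valued function. -/
def dZ (ρ : ℂ → ℝ) (z : ℂ) : ℂ := wirtZ (fun w => ((ρ w : ℝ) : ℂ)) z

/-- `f : ℂ → S^n ⊂ ℝ^{n+1}` is a conformal minimal immersion with conformal factor `ρ`:
`⟨f_z, f_z⟩ = 0`, `⟨f_z, f̄_z⟩ = (1/2) e^{2ρ}`, and `f_{z z̄} = −(1/2) e^{2ρ} f`. -/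
def IsConfMinImm {m : ℕ} (f : ℂ → Fin m → ℝ) (ρ : ℂ → ℝ) : Prop :=
  ContDiff ℝ (⊤ : ℕ∞) f ∧ ContDiff ℝ (⊤ : ℕ∞) ρ ∧
  (∀ z, ∑ i, (f z i) ^ 2 = 1) ∧
  (∀ z, pairC (WZ (Fc f) z) (WZ (Fc f) z) = 0) ∧
  (∀ z, pairC (WZ (Fc f) z) (conjV (WZ (Fc f) z)) = (1 / 2 : ℂ) * (Real.exp (2 * ρ z) : ℂ)) ∧
  (∀ z i, WZb (WZ (Fc f)) z i = -(1 / 2 : ℂ) * (Real.exp (2 * ρ z) : ℂ) * Fc f z i)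

/-- The Hopf field `Ω = f_{zz} − 2 ρ_z f_z`. -/
def Hopf {m : ℕ} (f : ℂ → Fin m → ℝ) (ρ : ℂ → ℝ) : ℂ → Fin m → ℂ :=
  fun z i => WZ (WZ (Fc f)) z i - 2 * dZ ρ z * WZ (Fc f) z i

/-- Real part `Ω₁` of the Hopf field, viewed in `ℂ^{n+1}`. -/
def HopfRe {m : ℕ} (f : ℂ → Fin m → ℝ) (ρ : ℂ → ℝ) : ℂ → Fin m → ℂ :=
  fun z i => ((Hopf f ρ z i).re : ℂ)

/-- Imaginary part `Ω₂` of the Hopf field, viewed in `ℂ^{n+1}`. -/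
def HopfIm {m : ℕ} (f : ℂ → Fin m → ℝ) (ρ : ℂ → ℝ) : ℂ → Fin m → ℂ :=
  fun z i => ((Hopf f ρ z i).im : ℂ)

/-- Normal projection `E^⊥` of a constant vector `E ∈ ℝ^{n+1}`. -/
def Eperp {m : ℕ} (f : ℂ → Fin m → ℝ) (ρ : ℂ → ℝ) (E : Fin m → ℝ) : ℂ → Fin m → ℂ :=
  fun z i => (E i : ℂ) - pairC (cV E) (Fc f z) * Fc f z i
    - 2 * (Real.exp (-2 * ρ z) : ℂ) * pairC (cV E) (WZ (Fc f) z) * WZb (Fc f) z i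
    - 2 * (Real.exp (-2 * ρ z) : ℂ) * pairC (cV E) (WZb (Fc f) z) * WZ (Fc f) z i

/-- `ψ` is a normal field along `f`. -/
def IsNormalField {m : ℕ} (f : ℂ → Fin m → ℝ) (ψ : ℂ → Fin m → ℂ) : Prop :=
  ∀ z, pairC (ψ z) (Fc f z) = 0 ∧ pairC (ψ z) (WZ (Fc f) z) = 0 ∧
    pairC (ψ z) (WZb (Fc f) z) = 0

/-- Normal covariant derivative `N_z ψ = ψ_z + 2 e^{−2ρ} ⟨ψ, Ω⟩ f_z̄`. -/
def NZ {m : ℕ} (f : ℂ → Fin m → ℝ) (ρ : ℂ → ℝ) (ψ : ℂ → Fin m → ℂ) : ℂ → Fin m → ℂ :=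
  fun z i => WZ ψ z i
    + 2 * (Real.exp (-2 * ρ z) : ℂ) * pairC (ψ z) (Hopf f ρ z) * WZb (Fc f) z i

/-- Normal covariant derivative `N_z̄ ψ = ψ_z̄ + 2 e^{−2ρ} ⟨ψ, Ω̄⟩ f_z`. -/
def NZb {m : ℕ} (f : ℂ → Fin m → ℝ) (ρ : ℂ → ℝ) (ψ : ℂ → Fin m → ℂ) : ℂ → Fin m → ℂ :=
  fun z i => WZb ψ z i
    + 2 * (Real.exp (-2 * ρ z) : ℂ) * pairC (ψ z) (conjV (Hopf f ρ z)) * WZ (Fc f) z i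

/-- Normal Laplacian `Δ^⊥ ψ = 2 e^{−2ρ} (N_z̄ (N_z ψ) + N_z (N_z̄ ψ))`. -/
def LapPerp {m : ℕ} (f : ℂ → Fin m → ℝ) (ρ : ℂ → ℝ) (ψ : ℂ → Fin m → ℂ) : ℂ → Fin m → ℂ :=
  fun z i => 2 * (Real.exp (-2 * ρ z) : ℂ) * (NZb f ρ (NZ f ρ ψ) z i + NZ f ρ (NZb f ρ ψ) z i)

/-- Jacobi operator `𝓛 ψ = Δ^⊥ ψ + 2 ψ + 4 e^{−4ρ} (⟨ψ, Ω⟩ Ω̄ + ⟨ψ, Ω̄⟩ Ω)`. -/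
def Jacobi {m : ℕ} (f : ℂ → Fin m → ℝ) (ρ : ℂ → ℝ) (ψ : ℂ → Fin m → ℂ) : ℂ → Fin m → ℂ :=
  fun z i => LapPerp f ρ ψ z i + 2 * ψ z i
    + 4 * (Real.exp (-4 * ρ z) : ℂ) *
      (pairC (ψ z) (Hopf f ρ z) * conjV (Hopf f ρ z) i
        + pairC (ψ z) (conjV (Hopf f ρ z)) * Hopf f ρ z i)

/-- The S⁴ adapted frame setup: `⟨Ω, Ω⟩ ≡ 1`, `Ω₁ = cosh θ · ψ₃`, `Ω₂ = sinh θ · ψ₄`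
with `ψ₃, ψ₄` orthonormal normal fields. -/
def S4Frame (f : ℂ → Fin 5 → ℝ) (ρ : ℂ → ℝ) (ψ₃ ψ₄ : ℂ → Fin 5 → ℝ) (θ : ℂ → ℝ) : Prop :=
  ContDiff ℝ (⊤ : ℕ∞) ψ₃ ∧ ContDiff ℝ (⊤ : ℕ∞) ψ₄ ∧ ContDiff ℝ (⊤ : ℕ∞) θ ∧
  IsNormalField f (Fc ψ₃) ∧ IsNormalField f (Fc ψ₄) ∧
  (∀ z, ∑ i, (ψ₃ z i) ^ 2 = 1) ∧ (∀ z, ∑ i, (ψ₄ z i) ^ 2 = 1) ∧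
  (∀ z, ∑ i, ψ₃ z i * ψ₄ z i = 0) ∧
  (∀ z, pairC (Hopf f ρ z) (Hopf f ρ z) = 1) ∧
  (∀ z i, (Hopf f ρ z i).re = Real.cosh (θ z) * ψ₃ z i) ∧
  (∀ z i, (Hopf f ρ z i).im = Real.sinh (θ z) * ψ₄ z i)

abbrev Sm (g : ℂ → ℂ) : Prop := ContDiff ℝ ((⊤:ℕ∞) : WithTop ℕ∞) g

lemma Sm.diff {g : ℂ → ℂ} (h : Sm g) (z : ℂ) : DifferentiableAt ℝ g z :=
  (h.differentiable (by norm_cast)).differentiableAt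

lemma sm_fderiv_apply {g : ℂ → ℂ} (h : Sm g) (v : ℂ) :
    Sm (fun z => fderiv ℝ g z v) := by
  have h1 : ContDiff ℝ ((⊤:ℕ∞) : WithTop ℕ∞) (fderiv ℝ g) := h.fderiv_right (by norm_cast)
  exact h1.clm_apply contDiff_const

lemma fderiv_swap {g : ℂ → ℂ} (h : Sm g) (z v w : ℂ) :
    fderiv ℝ (fun z' => fderiv ℝ g z' v) z w = fderiv ℝ (fun z' => fderiv ℝ g z' w) z v := by
  have hs : IsSymmSndFDerivAt ℝ g z := (h.contDiffAt).isSymmSndFDerivAt (by rw [minSmoothness_of_isRCLikeNormedField]; norm_cast)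
  have hd : ContDiff ℝ ((⊤:ℕ∞) : WithTop ℕ∞) (fderiv ℝ g) := h.fderiv_right (by norm_cast)
  have key : ∀ u : ℂ, fderiv ℝ (fun z' => fderiv ℝ g z' u) z
      = ((ContinuousLinearMap.apply ℝ ℂ u).comp (fderiv ℝ (fderiv ℝ g) z)) := by
    intro u
    exact (((ContinuousLinearMap.apply ℝ ℂ u).hasFDerivAt).comp z
      ((hd.differentiable (by norm_cast)) z).hasFDerivAt).fderiv
  rw [key v, key w]
  exact hs w v

lemma wirtZ_congr {g h : ℂ → ℂ} (e : g = h) (z : ℂ) : wirtZ g z = wirtZ h z := by rw [e]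

lemma wirtZ_add {g h : ℂ → ℂ} (hg : Sm g) (hh : Sm h) (z : ℂ) :
    wirtZ (fun w => g w + h w) z = wirtZ g z + wirtZ h z := by
  unfold wirtZ
  rw [fderiv_fun_add (hg.diff z) (hh.diff z)]
  simp; ring

lemma wirtZbar_add {g h : ℂ → ℂ} (hg : Sm g) (hh : Sm h) (z : ℂ) :
    wirtZbar (fun w => g w + h w) z = wirtZbar g z + wirtZbar h z := by
  unfold wirtZbar
  rw [fderiv_fun_add (hg.diff z) (hh.diff z)]
  simp; ring

lemma wirtZ_const (c : ℂ) (z : ℂ) : wirtZ (fun _ => c) z = 0 := by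
  unfold wirtZ; rw [fderiv_fun_const]; simp

lemma wirtZbar_const (c : ℂ) (z : ℂ) : wirtZbar (fun _ => c) z = 0 := by
  unfold wirtZbar; rw [fderiv_fun_const]; simp

lemma wirtZ_const_mul {g : ℂ → ℂ} (hg : Sm g) (c z : ℂ) :
    wirtZ (fun w => c * g w) z = c * wirtZ g z := by
  unfold wirtZ
  rw [fderiv_const_mul (hg.diff z)]
  simp; ring

lemma wirtZbar_const_mul {g : ℂ → ℂ} (hg : Sm g) (c z : ℂ) :
    wirtZbar (fun w => c * g w) z = c * wirtZbar g z := by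
  unfold wirtZbar
  rw [fderiv_const_mul (hg.diff z)]
  simp; ring

lemma wirtZ_mul {g h : ℂ → ℂ} (hg : Sm g) (hh : Sm h) (z : ℂ) :
    wirtZ (fun w => g w * h w) z = wirtZ g z * h z + g z * wirtZ h z := by
  unfold wirtZ
  rw [fderiv_fun_mul (hg.diff z) (hh.diff z)]
  simp; ring

lemma wirtZbar_mul {g h : ℂ → ℂ} (hg : Sm g) (hh : Sm h) (z : ℂ) :
    wirtZbar (fun w => g w * h w) z = wirtZbar g z * h z + g z * wirtZbar h z := by
  unfold wirtZbar
  rw [fderiv_fun_mul (hg.diff z) (hh.diff z)]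
  simp; ring

lemma fderiv_conj_comp (g : ℂ → ℂ) (z v : ℂ) :
    fderiv ℝ (fun w => (starRingEnd ℂ) (g w)) z v = (starRingEnd ℂ) (fderiv ℝ g z v) := by
  have : (fun w => (starRingEnd ℂ) (g w)) = (Complex.conjCLE ∘ g) := rfl
  rw [this, ContinuousLinearEquiv.comp_fderiv]
  rfl

lemma wirtZ_conj (g : ℂ → ℂ) (z : ℂ) :
    wirtZ (fun w => (starRingEnd ℂ) (g w)) z = (starRingEnd ℂ) (wirtZbar g z) := by
  unfold wirtZ wirtZbar
  rw [fderiv_conj_comp, fderiv_conj_comp]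
  simp [mul_comm, map_ofNat]
  try ring

lemma wirtZbar_conj (g : ℂ → ℂ) (z : ℂ) :
    wirtZbar (fun w => (starRingEnd ℂ) (g w)) z = (starRingEnd ℂ) (wirtZ g z) := by
  unfold wirtZ wirtZbar
  rw [fderiv_conj_comp, fderiv_conj_comp]
  simp [mul_comm, map_ofNat]
  try ring

lemma Sm.wirtZ {g : ℂ → ℂ} (hg : Sm g) : Sm (wirtZ g) := by
  unfold _root_.wirtZ
  exact contDiff_const.mul ((sm_fderiv_apply hg 1).sub (contDiff_const.mul (sm_fderiv_apply hg Complex.I)))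

lemma Sm.wirtZbar {g : ℂ → ℂ} (hg : Sm g) : Sm (wirtZbar g) := by
  unfold _root_.wirtZbar
  exact contDiff_const.mul ((sm_fderiv_apply hg 1).add (contDiff_const.mul (sm_fderiv_apply hg Complex.I)))

lemma wirt_comm {g : ℂ → ℂ} (hg : Sm g) (z : ℂ) :
    wirtZbar (wirtZ g) z = wirtZ (wirtZbar g) z := by
  have d1 : DifferentiableAt ℝ (fun w => fderiv ℝ g w 1) z := Sm.diff (sm_fderiv_apply hg 1) z
  have dI : DifferentiableAt ℝ (fun w => fderiv ℝ g w Complex.I) z := Sm.diff (sm_fderiv_apply hg Complex.I) z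
  have e1 : ∀ v, fderiv ℝ (wirtZ g) z v
      = (1/2:ℂ) * (fderiv ℝ (fun w => fderiv ℝ g w 1) z v
        - Complex.I * fderiv ℝ (fun w => fderiv ℝ g w Complex.I) z v) := by
    intro v
    unfold _root_.wirtZ
    rw [fderiv_const_mul (Sm.diff ((sm_fderiv_apply hg 1).sub
      (contDiff_const.mul (sm_fderiv_apply hg Complex.I))) z)]
    rw [fderiv_fun_sub d1 (Sm.diff (contDiff_const.mul (sm_fderiv_apply hg Complex.I)) z)]
    rw [fderiv_const_mul dI]
    simp
    try ring
  have e2 : ∀ v, fderiv ℝ (wirtZbar g) z v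
      = (1/2:ℂ) * (fderiv ℝ (fun w => fderiv ℝ g w 1) z v
        + Complex.I * fderiv ℝ (fun w => fderiv ℝ g w Complex.I) z v) := by
    intro v
    unfold _root_.wirtZbar
    rw [fderiv_const_mul (Sm.diff ((sm_fderiv_apply hg 1).add
      (contDiff_const.mul (sm_fderiv_apply hg Complex.I))) z)]
    rw [fderiv_fun_add d1 (Sm.diff (contDiff_const.mul (sm_fderiv_apply hg Complex.I)) z)]
    rw [fderiv_const_mul dI]
    simp
    try ring
  have E3 : wirtZbar (wirtZ g) z
      = (1/2:ℂ) * (fderiv ℝ (wirtZ g) z 1 + Complex.I * fderiv ℝ (wirtZ g) z Complex.I) := rfl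
  have E4 : wirtZ (wirtZbar g) z
      = (1/2:ℂ) * (fderiv ℝ (wirtZbar g) z 1 - Complex.I * fderiv ℝ (wirtZbar g) z Complex.I) := rfl
  rw [E3, E4, e1 1, e1 Complex.I, e2 1, e2 Complex.I, fderiv_swap hg z Complex.I 1]
  ring

lemma wirtZ_cexp {g : ℂ → ℂ} (hg : Sm g) (z : ℂ) :
    wirtZ (fun w => Complex.exp (g w)) z = Complex.exp (g z) * wirtZ g z := by
  have hd : ∀ v, fderiv ℝ (fun w => Complex.exp (g w)) z v
      = Complex.exp (g z) * fderiv ℝ g z v := by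
    intro v
    have h1 : HasFDerivAt Complex.exp
        ((Complex.exp (g z)) • (1 : ℂ →L[ℝ] ℂ)) (g z) := by
      have := (Complex.hasDerivAt_exp (g z)).hasFDerivAt.restrictScalars ℝ
      refine this.congr_fderiv ?_
      ext w
      simp [mul_comm]
    have h2 : HasFDerivAt (fun w => Complex.exp (g w))
        ((Complex.exp (g z) • (1 : ℂ →L[ℝ] ℂ)).comp (fderiv ℝ g z)) z :=
      h1.comp z (hg.diff z).hasFDerivAt
    rw [h2.fderiv]
    simp [mul_comm]
  unfold wirtZ
  rw [hd 1, hd Complex.I]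
  ring

lemma wirtZbar_cexp {g : ℂ → ℂ} (hg : Sm g) (z : ℂ) :
    wirtZbar (fun w => Complex.exp (g w)) z = Complex.exp (g z) * wirtZbar g z := by
  have hd : ∀ v, fderiv ℝ (fun w => Complex.exp (g w)) z v
      = Complex.exp (g z) * fderiv ℝ g z v := by
    intro v
    have h1 : HasFDerivAt Complex.exp
        ((Complex.exp (g z)) • (1 : ℂ →L[ℝ] ℂ)) (g z) := by
      have := (Complex.hasDerivAt_exp (g z)).hasFDerivAt.restrictScalars ℝ
      refine this.congr_fderiv ?_
      ext w
      simp [mul_comm]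
    have h2 : HasFDerivAt (fun w => Complex.exp (g w))
        ((Complex.exp (g z) • (1 : ℂ →L[ℝ] ℂ)).comp (fderiv ℝ g z)) z :=
      h1.comp z (hg.diff z).hasFDerivAt
    rw [h2.fderiv]
    simp [mul_comm]
  unfold wirtZbar
  rw [hd 1, hd Complex.I]
  ring

lemma Sm.cexp {g : ℂ → ℂ} (hg : Sm g) : Sm (fun w => Complex.exp (g w)) :=
  Complex.contDiff_exp.comp hg

lemma Sm.conj {g : ℂ → ℂ} (hg : Sm g) : Sm (fun w => (starRingEnd ℂ) (g w)) :=
  Complex.conjCLE.contDiff.comp hg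

/-! ### Vector-level lemmas -/

def SmV {m : ℕ} (u : ℂ → Fin m → ℂ) : Prop := ∀ i, Sm (fun z => u z i)

lemma wirtZ_finset_sum {ι : Type*} (s : Finset ι) (G : ι → ℂ → ℂ)
    (h : ∀ i ∈ s, Sm (G i)) (z : ℂ) :
    wirtZ (fun w => ∑ i ∈ s, G i w) z = ∑ i ∈ s, wirtZ (G i) z := by
  unfold wirtZ
  rw [fderiv_fun_sum (fun i hi => Sm.diff (h i hi) z)]
  simp [Finset.mul_sum, Finset.sum_sub_distrib, mul_sub]

lemma wirtZbar_finset_sum {ι : Type*} (s : Finset ι) (G : ι → ℂ → ℂ)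
    (h : ∀ i ∈ s, Sm (G i)) (z : ℂ) :
    wirtZbar (fun w => ∑ i ∈ s, G i w) z = ∑ i ∈ s, wirtZbar (G i) z := by
  unfold wirtZbar
  rw [fderiv_fun_sum (fun i hi => Sm.diff (h i hi) z)]
  simp [Finset.mul_sum, Finset.sum_add_distrib, mul_add]

lemma Sm_pairC {m : ℕ} {u v : ℂ → Fin m → ℂ} (hu : SmV u) (hv : SmV v) :
    Sm (fun w => pairC (u w) (v w)) := by
  unfold pairC
  exact ContDiff.sum (fun i _ => (hu i).mul (hv i))

lemma wirtZ_pairC {m : ℕ} {u v : ℂ → Fin m → ℂ} (hu : SmV u) (hv : SmV v) (z : ℂ) :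
    wirtZ (fun w => pairC (u w) (v w)) z = pairC (WZ u z) (v z) + pairC (u z) (WZ v z) := by
  unfold pairC
  rw [wirtZ_finset_sum _ _ (fun i _ => (hu i).mul (hv i))]
  rw [show (∑ i, wirtZ (fun w => u w i * v w i) z)
      = ∑ i, (wirtZ (fun w => u w i) z * v z i + u z i * wirtZ (fun w => v w i) z) from
    Finset.sum_congr rfl (fun i _ => wirtZ_mul (hu i) (hv i) z)]
  rw [Finset.sum_add_distrib]
  rfl

lemma wirtZbar_pairC {m : ℕ} {u v : ℂ → Fin m → ℂ} (hu : SmV u) (hv : SmV v) (z : ℂ) :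
    wirtZbar (fun w => pairC (u w) (v w)) z = pairC (WZb u z) (v z) + pairC (u z) (WZb v z) := by
  unfold pairC
  rw [wirtZbar_finset_sum _ _ (fun i _ => (hu i).mul (hv i))]
  rw [show (∑ i, wirtZbar (fun w => u w i * v w i) z)
      = ∑ i, (wirtZbar (fun w => u w i) z * v z i + u z i * wirtZbar (fun w => v w i) z) from
    Finset.sum_congr rfl (fun i _ => wirtZbar_mul (hu i) (hv i) z)]
  rw [Finset.sum_add_distrib]
  rfl

lemma pairC_conj {m : ℕ} (u v : Fin m → ℂ) :
    (starRingEnd ℂ) (pairC u v) = pairC (conjV u) (conjV v) := by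
  unfold pairC conjV
  rw [map_sum]
  simp

lemma pairC_comm {m : ℕ} (u v : Fin m → ℂ) : pairC u v = pairC v u := by
  unfold pairC; exact Finset.sum_congr rfl (fun i _ => mul_comm _ _)

lemma pairC_smul_right {m : ℕ} (u v : Fin m → ℂ) (c : ℂ) :
    pairC u (fun i => c * v i) = c * pairC u v := by
  unfold pairC; rw [Finset.mul_sum]; exact Finset.sum_congr rfl (fun i _ => by ring)

lemma SmV.WZ' {m : ℕ} {u : ℂ → Fin m → ℂ} (hu : SmV u) : SmV (WZ u) :=
  fun i => Sm.wirtZ (hu i)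

lemma SmV.WZb' {m : ℕ} {u : ℂ → Fin m → ℂ} (hu : SmV u) : SmV (WZb u) :=
  fun i => Sm.wirtZbar (hu i)

lemma SmV.conj' {m : ℕ} {u : ℂ → Fin m → ℂ} (hu : SmV u) :
    SmV (fun z => conjV (u z)) := fun i => Sm.conj (hu i)

lemma wirtZ_sub {g h : ℂ → ℂ} (hg : Sm g) (hh : Sm h) (z : ℂ) :
    wirtZ (fun w => g w - h w) z = wirtZ g z - wirtZ h z := by
  unfold wirtZ
  rw [fderiv_fun_sub (Sm.diff hg z) (Sm.diff hh z)]
  simp; ring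

lemma wirtZbar_sub {g h : ℂ → ℂ} (hg : Sm g) (hh : Sm h) (z : ℂ) :
    wirtZbar (fun w => g w - h w) z = wirtZbar g z - wirtZbar h z := by
  unfold wirtZbar
  rw [fderiv_fun_sub (Sm.diff hg z) (Sm.diff hh z)]
  simp; ring

lemma pairC_add_right {m : ℕ} (u v w : Fin m → ℂ) :
    pairC u (fun i => v i + w i) = pairC u v + pairC u w := by
  unfold pairC; rw [← Finset.sum_add_distrib]; exact Finset.sum_congr rfl fun i _ => by ring

lemma wirtZbar_congr {g h : ℂ → ℂ} (e : g = h) (z : ℂ) : wirtZbar g z = wirtZbar h z := by rw [e]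

/-! ### Context lemmas -/

def rC (ρ : ℂ → ℝ) : ℂ → ℂ := fun z => ((ρ z : ℝ) : ℂ)

section Main

variable {m : ℕ} {f : ℂ → Fin m → ℝ} {ρ : ℂ → ℝ}

lemma pairC_add_left {m : ℕ} (u v w : Fin m → ℂ) :
    pairC (fun i => u i + v i) w = pairC u w + pairC v w := by
  unfold pairC; rw [← Finset.sum_add_distrib]; exact Finset.sum_congr rfl fun i _ => by ring

lemma pairC_smul_left {m : ℕ} (u w : Fin m → ℂ) (c : ℂ) :
    pairC (fun i => c * u i) w = c * pairC u w := by
  unfold pairC; rw [Finset.mul_sum]; exact Finset.sum_congr rfl fun i _ => by ring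

lemma pairC_sub_smul_left {m : ℕ} (u v w : Fin m → ℂ) (c : ℂ) :
    pairC (fun i => u i - c * v i) w = pairC u w - c * pairC v w := by
  unfold pairC; rw [Finset.mul_sum, ← Finset.sum_sub_distrib]
  exact Finset.sum_congr rfl fun i _ => by ring

lemma pairC_zero_left {m : ℕ} (w : Fin m → ℂ) : pairC (fun _ => (0:ℂ)) w = 0 := by
  unfold pairC; simp

lemma smFc (hf : IsConfMinImm f ρ) : SmV (Fc f) := fun i =>
  Complex.ofRealCLM.contDiff.comp ((contDiff_pi.mp (hf.1.of_le (by simp))) i)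

lemma smrC (hf : IsConfMinImm f ρ) : Sm (rC ρ) :=
  Complex.ofRealCLM.contDiff.comp (hf.2.1.of_le (by simp))

lemma smFz (hf : IsConfMinImm f ρ) : SmV (WZ (Fc f)) := (smFc hf).WZ'
lemma smFzb (hf : IsConfMinImm f ρ) : SmV (WZb (Fc f)) := (smFc hf).WZb'

lemma conj_comp_Fc (i : Fin m) :
    (fun w => (starRingEnd ℂ) (Fc f w i)) = (fun w => Fc f w i) := by
  funext w; exact Complex.conj_ofReal _

lemma fzb_eq (z : ℂ) (i : Fin m) :
    WZb (Fc f) z i = (starRingEnd ℂ) (WZ (Fc f) z i) := by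
  have h := wirtZ_conj (fun w => Fc f w i) z
  rw [conj_comp_Fc] at h
  have : WZb (Fc f) z i = wirtZbar (fun w => Fc f w i) z := rfl
  rw [this, ← Complex.conj_conj (wirtZbar (fun w => Fc f w i) z), ← h]
  rfl

lemma conj_F (z : ℂ) : conjV (Fc f z) = Fc f z := by
  funext i; exact Complex.conj_ofReal _

lemma conj_Fz (z : ℂ) : conjV (WZ (Fc f) z) = WZb (Fc f) z := by
  funext i; exact (fzb_eq z i).symm

lemma conj_Fzb (z : ℂ) : conjV (WZb (Fc f) z) = WZ (Fc f) z := by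
  funext i
  show (starRingEnd ℂ) (WZb (Fc f) z i) = _
  rw [fzb_eq z i, Complex.conj_conj]

lemma ecast (t : ℝ) (z : ℂ) :
    ((Real.exp (t * ρ z) : ℝ) : ℂ) = Complex.exp ((t:ℂ) * rC ρ z) := by
  rw [Complex.ofReal_exp]; congr 1; push_cast; rfl

lemma smExp (hf : IsConfMinImm f ρ) (t : ℂ) : Sm (fun z => Complex.exp (t * rC ρ z)) :=
  Sm.cexp (contDiff_const.mul (smrC hf))

lemma wirtZ_exp_mul (hf : IsConfMinImm f ρ) (t : ℂ) (z : ℂ) :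
    wirtZ (fun w => Complex.exp (t * rC ρ w)) z
      = t * dZ ρ z * Complex.exp (t * rC ρ z) := by
  rw [wirtZ_cexp (contDiff_const.mul (smrC hf)) z,
    wirtZ_const_mul (smrC hf) t z]
  have : dZ ρ z = wirtZ (rC ρ) z := rfl
  rw [this]; ring

lemma wirtZbar_exp_mul (hf : IsConfMinImm f ρ) (t : ℂ) (z : ℂ) :
    wirtZbar (fun w => Complex.exp (t * rC ρ w)) z
      = t * wirtZbar (rC ρ) z * Complex.exp (t * rC ρ z) := by
  rw [wirtZbar_cexp (contDiff_const.mul (smrC hf)) z,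
    wirtZbar_const_mul (smrC hf) t z]
  ring

lemma smdZ (hf : IsConfMinImm f ρ) : Sm (dZ ρ) := Sm.wirtZ (smrC hf)

lemma smOm (hf : IsConfMinImm f ρ) : SmV (Hopf f ρ) := by
  intro i
  have : (fun z => Hopf f ρ z i)
      = fun z => WZ (WZ (Fc f)) z i - 2 * dZ ρ z * WZ (Fc f) z i := rfl
  rw [this]
  exact (((smFz hf).WZ') i).sub ((contDiff_const.mul (smdZ hf)).mul ((smFz hf) i))

lemma pairFF (hf : IsConfMinImm f ρ) (z : ℂ) : pairC (Fc f z) (Fc f z) = 1 := by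
  unfold pairC
  have h := hf.2.2.1 z
  have : ∀ i, Fc f z i * Fc f z i = (((f z i)^2 : ℝ) : ℂ) := by
    intro i; show ((f z i : ℂ)) * ((f z i : ℂ)) = _; push_cast; ring
  rw [Finset.sum_congr rfl (fun i _ => this i), ← Complex.ofReal_sum]
  rw [show (∑ i, (f z i)^2) = 1 from h]; norm_num

lemma pairFzF (hf : IsConfMinImm f ρ) (z : ℂ) : pairC (WZ (Fc f) z) (Fc f z) = 0 := by
  have h0 : wirtZ (fun w => pairC (Fc f w) (Fc f w)) z = 0 := by
    rw [show (fun w => pairC (Fc f w) (Fc f w)) = fun _ => (1:ℂ) from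
      funext (fun w => pairFF hf w)]
    exact wirtZ_const 1 z
  rw [wirtZ_pairC (smFc hf) (smFc hf) z] at h0
  rw [pairC_comm (Fc f z) (WZ (Fc f) z)] at h0
  linear_combination h0 / 2

lemma pairFzbF (hf : IsConfMinImm f ρ) (z : ℂ) : pairC (WZb (Fc f) z) (Fc f z) = 0 := by
  have := congrArg (starRingEnd ℂ) (pairFzF hf z)
  rw [pairC_conj, conj_F, conj_Fz] at this
  simpa using this

lemma pairFzFzb (hf : IsConfMinImm f ρ) (z : ℂ) :
    pairC (WZ (Fc f) z) (WZb (Fc f) z) = (1/2 : ℂ) * Complex.exp (2 * rC ρ z) := by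
  have h := hf.2.2.2.2.1 z
  rw [← conj_Fz z]
  rw [h, show ((2:ℝ) * ρ z) = (2:ℝ) * ρ z from rfl]
  rw [show ((Real.exp (2 * ρ z) : ℝ) : ℂ) = Complex.exp ((2:ℝ) * rC ρ z) from ecast 2 z]
  norm_num

lemma mixedF (hf : IsConfMinImm f ρ) (z : ℂ) (i : Fin m) :
    WZb (WZ (Fc f)) z i = -(1/2 : ℂ) * Complex.exp (2 * rC ρ z) * Fc f z i := by
  have h := hf.2.2.2.2.2 z i
  rw [h, show ((Real.exp (2 * ρ z) : ℝ) : ℂ) = Complex.exp ((2:ℝ) * rC ρ z) from ecast 2 z]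
  norm_num

lemma mixedF' (hf : IsConfMinImm f ρ) (z : ℂ) (i : Fin m) :
    WZ (WZb (Fc f)) z i = -(1/2 : ℂ) * Complex.exp (2 * rC ρ z) * Fc f z i := by
  rw [← mixedF hf z i]
  exact (wirt_comm ((smFc hf) i) z).symm

end Main

section Main2

variable {m : ℕ} {f : ℂ → Fin m → ℝ} {ρ : ℂ → ℝ}

/-- coefficient `c = e^{2ρ}/2 + 2 ρ_{z z̄}` in the Codazzi equation. -/
def ccf (ρ : ℂ → ℝ) : ℂ → ℂ :=
  fun z => (1/2 : ℂ) * Complex.exp (2 * rC ρ z) + 2 * wirtZbar (dZ ρ) z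

/-- `u = ⟨Ω, Ω̄⟩`. -/
def uu (f : ℂ → Fin m → ℝ) (ρ : ℂ → ℝ) : ℂ → ℂ :=
  fun z => pairC (Hopf f ρ z) (conjV (Hopf f ρ z))

lemma expE (s t z : ℂ) :
    Complex.exp (s * rC ρ z) * Complex.exp (t * rC ρ z)
      = Complex.exp ((s + t) * rC ρ z) := by
  rw [← Complex.exp_add]; ring_nf

lemma exp0 (z : ℂ) : Complex.exp ((0:ℂ) * rC ρ z) = 1 := by simp

lemma pairHopf_left (z : ℂ) (w : Fin m → ℂ) :
    pairC (Hopf f ρ z) w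
      = pairC (WZ (WZ (Fc f)) z) w - 2 * dZ ρ z * pairC (WZ (Fc f) z) w := by
  rw [show (Hopf f ρ z) = (fun i => WZ (WZ (Fc f)) z i - (2 * dZ ρ z) * WZ (Fc f) z i) from rfl,
    pairC_sub_smul_left]

lemma pairFzzF (hf : IsConfMinImm f ρ) (z : ℂ) :
    pairC (WZ (WZ (Fc f)) z) (Fc f z) = - pairC (WZ (Fc f) z) (WZ (Fc f) z) := by
  have h0 : wirtZ (fun w => pairC (WZ (Fc f) w) (Fc f w)) z = 0 := by
    rw [show (fun w => pairC (WZ (Fc f) w) (Fc f w)) = fun _ => (0:ℂ) from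
      funext (fun w => pairFzF hf w)]
    exact wirtZ_const 0 z
  rw [wirtZ_pairC (smFz hf) (smFc hf) z] at h0
  linear_combination h0

lemma pairFzzFz (hf : IsConfMinImm f ρ) (z : ℂ) :
    pairC (WZ (WZ (Fc f)) z) (WZ (Fc f) z) = 0 := by
  have h0 : wirtZ (fun w => pairC (WZ (Fc f) w) (WZ (Fc f) w)) z = 0 := by
    rw [show (fun w => pairC (WZ (Fc f) w) (WZ (Fc f) w)) = fun _ => (0:ℂ) from
      funext (fun w => hf.2.2.2.1 w)]
    exact wirtZ_const 0 z
  rw [wirtZ_pairC (smFz hf) (smFz hf) z,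
    pairC_comm (WZ (Fc f) z) (WZ (WZ (Fc f)) z)] at h0
  linear_combination h0 / 2

lemma pairFzzFzb (hf : IsConfMinImm f ρ) (z : ℂ) :
    pairC (WZ (WZ (Fc f)) z) (WZb (Fc f) z) = dZ ρ z * Complex.exp (2 * rC ρ z) := by
  have h0 : wirtZ (fun w => pairC (WZ (Fc f) w) (WZb (Fc f) w)) z
      = dZ ρ z * Complex.exp (2 * rC ρ z) := by
    rw [show (fun w => pairC (WZ (Fc f) w) (WZb (Fc f) w))
        = fun w => (1/2 : ℂ) * Complex.exp ((2:ℂ) * rC ρ w) from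
      funext (fun w => pairFzFzb hf w)]
    rw [wirtZ_const_mul (smExp hf 2) ((1:ℂ)/2) z, wirtZ_exp_mul hf 2 z]
    ring
  rw [wirtZ_pairC (smFz hf) (smFzb hf) z] at h0
  have h1 : pairC (WZ (Fc f) z) (WZ (WZb (Fc f)) z) = 0 := by
    rw [show (WZ (WZb (Fc f)) z)
        = (fun i => (-(1/2 : ℂ) * Complex.exp (2 * rC ρ z)) * Fc f z i) from
      funext (fun i => by rw [mixedF' hf z i]; try ring)]
    rw [pairC_smul_right, pairFzF hf z]
    try ring
  rw [h1] at h0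
  linear_combination h0

lemma pairOmF (hf : IsConfMinImm f ρ) (z : ℂ) : pairC (Hopf f ρ z) (Fc f z) = 0 := by
  rw [pairHopf_left, pairFzzF hf z, pairFzF hf z, hf.2.2.2.1 z]; ring

lemma pairOmFz (hf : IsConfMinImm f ρ) (z : ℂ) : pairC (Hopf f ρ z) (WZ (Fc f) z) = 0 := by
  rw [pairHopf_left, pairFzzFz hf z, hf.2.2.2.1 z]; ring

lemma pairOmFzb (hf : IsConfMinImm f ρ) (z : ℂ) : pairC (Hopf f ρ z) (WZb (Fc f) z) = 0 := by
  rw [pairHopf_left, pairFzzFzb hf z, pairFzFzb hf z]; ring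

lemma pairOmbF (hf : IsConfMinImm f ρ) (z : ℂ) :
    pairC (conjV (Hopf f ρ z)) (Fc f z) = 0 := by
  have := congrArg (starRingEnd ℂ) (pairOmF hf z)
  rw [pairC_conj, conj_F] at this
  simpa using this

lemma pairOmbFz (hf : IsConfMinImm f ρ) (z : ℂ) :
    pairC (conjV (Hopf f ρ z)) (WZ (Fc f) z) = 0 := by
  have := congrArg (starRingEnd ℂ) (pairOmFzb hf z)
  rw [pairC_conj, conj_Fzb] at this
  simpa using this

lemma pairOmbFzb (hf : IsConfMinImm f ρ) (z : ℂ) :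
    pairC (conjV (Hopf f ρ z)) (WZb (Fc f) z) = 0 := by
  have := congrArg (starRingEnd ℂ) (pairOmFz hf z)
  rw [pairC_conj, conj_Fz] at this
  simpa using this

lemma codazzi (hf : IsConfMinImm f ρ) (z : ℂ) (i : Fin m) :
    WZb (Hopf f ρ) z i = -(ccf ρ z) * WZ (Fc f) z i := by
  have e0 : (fun w => Hopf f ρ w i)
      = (fun w => WZ (WZ (Fc f)) w i - (fun w' => 2 * dZ ρ w' * WZ (Fc f) w' i) w) := rfl
  have smA : Sm (fun w => WZ (WZ (Fc f)) w i) := ((smFz hf).WZ') i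
  have smB : Sm (fun w => 2 * dZ ρ w * WZ (Fc f) w i) := by
    exact (contDiff_const.mul (smdZ hf)).mul ((smFz hf) i)
  have e1 : WZb (Hopf f ρ) z i
      = wirtZbar (fun w => WZ (WZ (Fc f)) w i) z
        - wirtZbar (fun w => 2 * dZ ρ w * WZ (Fc f) w i) z := by
    rw [show WZb (Hopf f ρ) z i = wirtZbar (fun w => Hopf f ρ w i) z from rfl,
      wirtZbar_congr e0 z, wirtZbar_sub smA smB z]
  -- first term: commute and use mixedF
  have e2 : wirtZbar (fun w => WZ (WZ (Fc f)) w i) z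
      = - dZ ρ z * Complex.exp (2 * rC ρ z) * Fc f z i
        - (1/2 : ℂ) * Complex.exp (2 * rC ρ z) * WZ (Fc f) z i := by
    have c1 : wirtZbar (fun w => WZ (WZ (Fc f)) w i) z
        = wirtZ (fun w => WZb (WZ (Fc f)) w i) z :=
      wirt_comm (((smFz hf) i)) z
    rw [c1]
    rw [wirtZ_congr (funext fun w => mixedF hf w i) z]
    have : (fun w => -(1/2 : ℂ) * Complex.exp (2 * rC ρ w) * Fc f w i)
        = (fun w => ((-(1/2) : ℂ) * Complex.exp ((2:ℂ) * rC ρ w)) * Fc f w i) := by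
      funext w; ring
    rw [wirtZ_congr this z,
      wirtZ_mul (contDiff_const.mul (smExp hf 2)) ((smFc hf) i) z,
      wirtZ_const_mul (smExp hf 2) (-(1/2) : ℂ) z, wirtZ_exp_mul hf 2 z]
    have hfz : wirtZ (fun w => Fc f w i) z = WZ (Fc f) z i := rfl
    rw [hfz]
    ring
  -- second term
  have e3 : wirtZbar (fun w => 2 * dZ ρ w * WZ (Fc f) w i) z
      = 2 * wirtZbar (dZ ρ) z * WZ (Fc f) z i
        + 2 * dZ ρ z * (-(1/2 : ℂ) * Complex.exp (2 * rC ρ z) * Fc f z i) := by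
    have : (fun w => 2 * dZ ρ w * WZ (Fc f) w i)
        = (fun w => ((2:ℂ) * dZ ρ w) * WZ (Fc f) w i) := rfl
    rw [wirtZbar_congr this z,
      wirtZbar_mul (contDiff_const.mul (smdZ hf)) ((smFz hf) i) z,
      wirtZbar_const_mul (smdZ hf) 2 z]
    have hm : wirtZbar (fun w => WZ (Fc f) w i) z = WZb (WZ (Fc f)) z i := rfl
    rw [hm, mixedF hf z i]
  rw [e1, e2, e3]
  unfold ccf
  ring

lemma gauss (hf : IsConfMinImm f ρ) (z : ℂ) :
    uu f ρ z = ccf ρ z * ((1/2 : ℂ) * Complex.exp (2 * rC ρ z)) := by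
  have h0 : wirtZbar (fun w => pairC (Hopf f ρ w) (WZb (Fc f) w)) z = 0 := by
    rw [show (fun w => pairC (Hopf f ρ w) (WZb (Fc f) w)) = fun _ => (0:ℂ) from
      funext (fun w => pairOmFzb hf w)]
    exact wirtZbar_const 0 z
  rw [wirtZbar_pairC (smOm hf) (smFzb hf) z] at h0
  have h1 : pairC (WZb (Hopf f ρ) z) (WZb (Fc f) z)
      = -(ccf ρ z) * ((1/2 : ℂ) * Complex.exp (2 * rC ρ z)) := by
    rw [show (WZb (Hopf f ρ) z) = (fun i => -(ccf ρ z) * WZ (Fc f) z i) from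
      funext (fun i => codazzi hf z i)]
    rw [pairC_smul_left, pairFzFzb hf z]
  have h2 : pairC (Hopf f ρ z) (WZb (WZb (Fc f)) z) = uu f ρ z := by
    have e : WZb (WZb (Fc f)) z
        = (fun i => conjV (Hopf f ρ z) i + (2 * (starRingEnd ℂ) (dZ ρ z)) * WZb (Fc f) z i) := by
      funext i
      have c1 : (fun w => WZb (Fc f) w i) = (fun w => (starRingEnd ℂ) (WZ (Fc f) w i)) :=
        funext (fun w => fzb_eq w i)
      have : WZb (WZb (Fc f)) z i = wirtZbar (fun w => (starRingEnd ℂ) (WZ (Fc f) w i)) z := by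
        rw [show WZb (WZb (Fc f)) z i = wirtZbar (fun w => WZb (Fc f) w i) z from rfl,
          wirtZbar_congr c1 z]
      rw [this, wirtZbar_conj]
      have : wirtZ (fun w => WZ (Fc f) w i) z = WZ (WZ (Fc f)) z i := rfl
      rw [this]
      have hOm : WZ (WZ (Fc f)) z i = Hopf f ρ z i + 2 * dZ ρ z * WZ (Fc f) z i := by
        show _ = (WZ (WZ (Fc f)) z i - 2 * dZ ρ z * WZ (Fc f) z i) + 2 * dZ ρ z * WZ (Fc f) z i
        ring
      rw [hOm]
      rw [map_add, map_mul, map_mul]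
      rw [show (starRingEnd ℂ) (WZ (Fc f) z i) = WZb (Fc f) z i from (fzb_eq z i).symm]
      show conjV (Hopf f ρ z) i + _ = _
      simp [map_ofNat]
      try ring
    rw [e, pairC_add_right, pairC_smul_right, pairOmFzb hf z]
    unfold uu
    ring
  rw [h1, h2] at h0
  linear_combination h0

lemma uu_deriv (hf : IsConfMinImm f ρ) (z : ℂ) :
    wirtZ (uu f ρ) z = pairC (WZ (Hopf f ρ) z) (conjV (Hopf f ρ z)) := by
  have h0 : wirtZ (uu f ρ) z
      = pairC (WZ (Hopf f ρ) z) (conjV (Hopf f ρ z))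
        + pairC (Hopf f ρ z) (WZ (fun w => conjV (Hopf f ρ w)) z) := by
    exact wirtZ_pairC (smOm hf) ((smOm hf).conj') z
  have h1 : pairC (Hopf f ρ z) (WZ (fun w => conjV (Hopf f ρ w)) z) = 0 := by
    have e : WZ (fun w => conjV (Hopf f ρ w)) z
        = (fun i => (-(starRingEnd ℂ) (ccf ρ z)) * WZb (Fc f) z i) := by
      funext i
      show wirtZ (fun w => (starRingEnd ℂ) (Hopf f ρ w i)) z = _
      rw [wirtZ_conj]
      rw [show wirtZbar (fun w => Hopf f ρ w i) z = WZb (Hopf f ρ) z i from rfl,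
        codazzi hf z i]
      rw [map_mul, map_neg]
      rw [show (starRingEnd ℂ) (WZ (Fc f) z i) = WZb (Fc f) z i from (fzb_eq z i).symm]
      try ring
    rw [e, pairC_smul_right, pairOmFzb hf z]
    try ring
  rw [h0, h1]
  ring

end Main2

section Main3

variable {m : ℕ} {f : ℂ → Fin m → ℝ} {ρ : ℂ → ℝ}

lemma ecastm2 (z : ℂ) :
    ((Real.exp (-2 * ρ z) : ℝ) : ℂ) = Complex.exp ((-2 : ℂ) * rC ρ z) := by
  rw [ecast (-2) z]; norm_num

lemma ecastm4 (z : ℂ) :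
    ((Real.exp (-4 * ρ z) : ℝ) : ℂ) = Complex.exp ((-4 : ℂ) * rC ρ z) := by
  rw [ecast (-4) z]; norm_num

lemma conj_dZ (z : ℂ) : (starRingEnd ℂ) (dZ ρ z) = wirtZbar (rC ρ) z := by
  have h := wirtZbar_conj (rC ρ) z
  have e : (fun w => (starRingEnd ℂ) (rC ρ w)) = rC ρ := by
    funext w; exact Complex.conj_ofReal _
  rw [e] at h
  rw [show dZ ρ z = wirtZ (rC ρ) z from rfl, h]

lemma sm_ccf (hf : IsConfMinImm f ρ) : Sm (ccf ρ) := by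
  unfold ccf
  exact (contDiff_const.mul (smExp hf 2)).add (contDiff_const.mul (Sm.wirtZbar (smdZ hf)))

lemma NZbOm0 (hf : IsConfMinImm f ρ) (z : ℂ) (i : Fin m) :
    NZb f ρ (Hopf f ρ) z i = 0 := by
  show WZb (Hopf f ρ) z i
      + 2 * ((Real.exp (-2 * ρ z) : ℝ) : ℂ) * pairC (Hopf f ρ z) (conjV (Hopf f ρ z))
        * WZ (Fc f) z i = 0
  rw [codazzi hf z i, ecastm2 z,
    show pairC (Hopf f ρ z) (conjV (Hopf f ρ z)) = uu f ρ z from rfl, gauss hf z]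
  have h1 : Complex.exp ((-2:ℂ) * rC ρ z) * Complex.exp ((2:ℂ) * rC ρ z) = 1 := by
    rw [expE]; norm_num
  linear_combination (ccf ρ z * WZ (Fc f) z i) * h1

lemma wzbFzb (z : ℂ) (i : Fin m) :
    WZb (WZb (Fc f)) z i
      = (starRingEnd ℂ) (WZ (WZ (Fc f)) z i) := by
  have c1 : (fun w => WZb (Fc f) w i) = (fun w => (starRingEnd ℂ) (WZ (Fc f) w i)) :=
    funext (fun w => fzb_eq w i)
  rw [show WZb (WZb (Fc f)) z i = wirtZbar (fun w => WZb (Fc f) w i) z from rfl,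
    wirtZbar_congr c1 z, wirtZbar_conj]
  rfl

lemma NZOm_eq {a : ℝ} (ha : ∀ z : ℂ, pairC (Hopf f ρ z) (Hopf f ρ z) = (a : ℂ)) :
    NZ f ρ (Hopf f ρ) = fun z i => WZ (Hopf f ρ) z i
      + (2 * (a:ℂ)) * (Complex.exp ((-2:ℂ) * rC ρ z) * WZb (Fc f) z i) := by
  funext z i
  show WZ (Hopf f ρ) z i
      + 2 * ((Real.exp (-2 * ρ z) : ℝ) : ℂ) * pairC (Hopf f ρ z) (Hopf f ρ z)
        * WZb (Fc f) z i = _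
  rw [ha z, ecastm2 z]; ring

lemma NZbNZOm (hf : IsConfMinImm f ρ) {a : ℝ}
    (ha : ∀ z : ℂ, pairC (Hopf f ρ z) (Hopf f ρ z) = (a : ℂ)) (z : ℂ) (i : Fin m) :
    NZb f ρ (NZ f ρ (Hopf f ρ)) z i
      = -(ccf ρ z) * Hopf f ρ z i
        + (2 * (a:ℂ)) * Complex.exp ((-2:ℂ) * rC ρ z) * conjV (Hopf f ρ z) i := by
  have h1 : Complex.exp ((-2:ℂ) * rC ρ z) * Complex.exp ((2:ℂ) * rC ρ z) = 1 := by
    rw [expE]; norm_num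
  have smEm : Sm (fun w => Complex.exp ((-2:ℂ) * rC ρ w)) := smExp hf (-2)
  -- T1 : ∂_z̄ of WZ Ω
  have T1 : wirtZbar (fun w => WZ (Hopf f ρ) w i) z
      = -(wirtZ (ccf ρ) z) * WZ (Fc f) z i
        - ccf ρ z * (Hopf f ρ z i + 2 * dZ ρ z * WZ (Fc f) z i) := by
    have c1 : wirtZbar (fun w => WZ (Hopf f ρ) w i) z
        = wirtZ (fun w => WZb (Hopf f ρ) w i) z := wirt_comm ((smOm hf) i) z
    rw [c1]
    have c2 : (fun w => WZb (Hopf f ρ) w i)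
        = (fun w => ((-1:ℂ) * ccf ρ w) * WZ (Fc f) w i) := by
      funext w; rw [codazzi hf w i]; ring
    rw [wirtZ_congr c2 z,
      wirtZ_mul (contDiff_const.mul (sm_ccf hf)) ((smFz hf) i) z,
      wirtZ_const_mul (sm_ccf hf) (-1 : ℂ) z]
    have c3 : wirtZ (fun w => WZ (Fc f) w i) z = WZ (WZ (Fc f)) z i := rfl
    have c4 : WZ (WZ (Fc f)) z i = Hopf f ρ z i + 2 * dZ ρ z * WZ (Fc f) z i := by
      show _ = (WZ (WZ (Fc f)) z i - 2 * dZ ρ z * WZ (Fc f) z i) + 2 * dZ ρ z * WZ (Fc f) z i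
      ring
    rw [c3, c4]
    ring
  -- T2 : ∂_z̄ of (e^{-2ρ} F_z̄)
  have T2 : wirtZbar (fun w => Complex.exp ((-2:ℂ) * rC ρ w) * WZb (Fc f) w i) z
      = Complex.exp ((-2:ℂ) * rC ρ z) * (starRingEnd ℂ) (Hopf f ρ z i) := by
    rw [wirtZbar_mul smEm ((smFzb hf) i) z, wirtZbar_exp_mul hf (-2) z]
    have c1 : wirtZbar (fun w => WZb (Fc f) w i) z = WZb (WZb (Fc f)) z i := rfl
    rw [c1, wzbFzb z i]
    have c4 : WZ (WZ (Fc f)) z i = Hopf f ρ z i + 2 * dZ ρ z * WZ (Fc f) z i := by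
      show _ = (WZ (WZ (Fc f)) z i - 2 * dZ ρ z * WZ (Fc f) z i) + 2 * dZ ρ z * WZ (Fc f) z i
      ring
    rw [c4, map_add, map_mul, map_mul, conj_dZ,
      show (starRingEnd ℂ) (WZ (Fc f) z i) = WZb (Fc f) z i from (fzb_eq z i).symm]
    simp [map_ofNat]
    ring
  -- pairing term
  have T3 : pairC (NZ f ρ (Hopf f ρ) z) (conjV (Hopf f ρ z))
      = (1/2 : ℂ) * wirtZ (ccf ρ) z * Complex.exp ((2:ℂ) * rC ρ z)
        + ccf ρ z * dZ ρ z * Complex.exp ((2:ℂ) * rC ρ z) := by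
    have e1 : NZ f ρ (Hopf f ρ) z
        = (fun i => WZ (Hopf f ρ) z i
            + ((2 * (a:ℂ)) * (Complex.exp ((-2:ℂ) * rC ρ z))) * WZb (Fc f) z i) := by
      rw [NZOm_eq ha]; funext j; ring
    rw [e1, pairC_add_left, pairC_smul_left]
    rw [pairC_comm (WZb (Fc f) z) (conjV (Hopf f ρ z)), pairOmbFzb hf z]
    have e2 : pairC (WZ (Hopf f ρ) z) (conjV (Hopf f ρ z)) = wirtZ (uu f ρ) z :=
      (uu_deriv hf z).symm
    rw [e2]
    have e3 : (uu f ρ) = (fun w => ccf ρ w * ((1/2 : ℂ) * Complex.exp ((2:ℂ) * rC ρ w))) :=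
      funext (fun w => gauss hf w)
    rw [wirtZ_congr e3 z,
      wirtZ_mul (sm_ccf hf) (contDiff_const.mul (smExp hf 2)) z,
      wirtZ_const_mul (smExp hf 2) ((1:ℂ)/2) z, wirtZ_exp_mul hf 2 z]
    ring
  -- assemble
  show WZb (NZ f ρ (Hopf f ρ)) z i
      + 2 * ((Real.exp (-2 * ρ z) : ℝ) : ℂ)
        * pairC (NZ f ρ (Hopf f ρ) z) (conjV (Hopf f ρ z)) * WZ (Fc f) z i = _
  have e4 : WZb (NZ f ρ (Hopf f ρ)) z i
      = wirtZbar (fun w => WZ (Hopf f ρ) w i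
          + (2 * (a:ℂ)) * (Complex.exp ((-2:ℂ) * rC ρ w) * WZb (Fc f) w i)) z := by
    rw [show WZb (NZ f ρ (Hopf f ρ)) z i = wirtZbar (fun w => NZ f ρ (Hopf f ρ) w i) z from rfl]
    apply wirtZbar_congr
    funext w
    rw [NZOm_eq ha]
  rw [e4, wirtZbar_add ((smOm hf).WZ' i)
      (contDiff_const.mul (smEm.mul ((smFzb hf) i))) z,
    wirtZbar_const_mul (smEm.mul ((smFzb hf) i)) (2 * (a:ℂ)) z,
    T1, T2, T3, ecastm2 z]
  show _ = -(ccf ρ z) * Hopf f ρ z i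
      + (2 * (a:ℂ)) * Complex.exp ((-2:ℂ) * rC ρ z) * (starRingEnd ℂ) (Hopf f ρ z i)
  linear_combination ((wirtZ (ccf ρ) z + 2 * ccf ρ z * dZ ρ z) * WZ (Fc f) z i) * h1

lemma NZNZbOm0 (hf : IsConfMinImm f ρ) (z : ℂ) (i : Fin m) :
    NZ f ρ (NZb f ρ (Hopf f ρ)) z i = 0 := by
  have e0 : NZb f ρ (Hopf f ρ) = (fun _ _ => (0:ℂ)) := by
    funext w j; exact NZbOm0 hf w j
  show WZ (NZb f ρ (Hopf f ρ)) z i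
      + 2 * ((Real.exp (-2 * ρ z) : ℝ) : ℂ)
        * pairC (NZb f ρ (Hopf f ρ) z) (Hopf f ρ z) * WZb (Fc f) z i = 0
  rw [e0]
  rw [show WZ (fun _ _ => (0:ℂ)) z i = wirtZ (fun _ => (0:ℂ)) z from rfl, wirtZ_const 0 z]
  rw [show pairC (fun _ => (0:ℂ)) (Hopf f ρ z) = 0 from pairC_zero_left _]
  ring

lemma jacobiOm (hf : IsConfMinImm f ρ) {a : ℝ}
    (ha : ∀ z : ℂ, pairC (Hopf f ρ z) (Hopf f ρ z) = (a : ℂ)) (z : ℂ) (i : Fin m) :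
    Jacobi f ρ (Hopf f ρ) z i
      = 2 * Hopf f ρ z i
        + 8 * (a:ℂ) * Complex.exp ((-4:ℂ) * rC ρ z) * conjV (Hopf f ρ z) i := by
  have h1 : Complex.exp ((-2:ℂ) * rC ρ z) * Complex.exp ((2:ℂ) * rC ρ z) = 1 := by
    rw [expE]; norm_num
  have h2 : Complex.exp ((-2:ℂ) * rC ρ z) * Complex.exp ((-2:ℂ) * rC ρ z)
      = Complex.exp ((-4:ℂ) * rC ρ z) := by
    rw [expE]; norm_num
  have h3 : Complex.exp ((-4:ℂ) * rC ρ z) * Complex.exp ((2:ℂ) * rC ρ z)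
      = Complex.exp ((-2:ℂ) * rC ρ z) := by
    rw [expE]; norm_num
  show LapPerp f ρ (Hopf f ρ) z i + 2 * Hopf f ρ z i
      + 4 * ((Real.exp (-4 * ρ z) : ℝ) : ℂ)
        * (pairC (Hopf f ρ z) (Hopf f ρ z) * conjV (Hopf f ρ z) i
          + pairC (Hopf f ρ z) (conjV (Hopf f ρ z)) * Hopf f ρ z i) = _
  have hl : LapPerp f ρ (Hopf f ρ) z i
      = 2 * ((Real.exp (-2 * ρ z) : ℝ) : ℂ)
        * (NZb f ρ (NZ f ρ (Hopf f ρ)) z i + NZ f ρ (NZb f ρ (Hopf f ρ)) z i) := rfl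
  rw [hl, NZbNZOm hf ha z i, NZNZbOm0 hf z i, ha z,
    show pairC (Hopf f ρ z) (conjV (Hopf f ρ z)) = uu f ρ z from rfl, gauss hf z,
    ecastm2 z, ecastm4 z]
  linear_combination (4 * (a:ℂ) * conjV (Hopf f ρ z) i) * h2
    + (2 * ccf ρ z * Hopf f ρ z i) * h3

end Main3

section Main4

variable {m : ℕ} {f : ℂ → Fin m → ℝ} {ρ : ℂ → ℝ}

lemma conjV_conjV (u : Fin m → ℂ) : conjV (conjV u) = u := by
  funext i; simp [conjV]

lemma CN (ψ : ℂ → Fin m → ℂ) (z : ℂ) (i : Fin m) :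
    NZb f ρ (fun w => conjV (ψ w)) z i = (starRingEnd ℂ) (NZ f ρ ψ z i) := by
  show wirtZbar (fun w => (starRingEnd ℂ) (ψ w i)) z
      + 2 * ((Real.exp (-2 * ρ z) : ℝ) : ℂ)
        * pairC (conjV (ψ z)) (conjV (Hopf f ρ z)) * WZ (Fc f) z i
      = (starRingEnd ℂ) (WZ ψ z i
        + 2 * ((Real.exp (-2 * ρ z) : ℝ) : ℂ) * pairC (ψ z) (Hopf f ρ z) * WZb (Fc f) z i)
  rw [wirtZbar_conj, ← pairC_conj,
    show WZ (Fc f) z i = (starRingEnd ℂ) (WZb (Fc f) z i) from by rw [fzb_eq]; simp]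
  simp [map_ofNat, Complex.conj_ofReal, ← Complex.exp_conj, map_neg]
  try ring
  try rfl

lemma CNb (ψ : ℂ → Fin m → ℂ) (z : ℂ) (i : Fin m) :
    NZ f ρ (fun w => conjV (ψ w)) z i = (starRingEnd ℂ) (NZb f ρ ψ z i) := by
  show wirtZ (fun w => (starRingEnd ℂ) (ψ w i)) z
      + 2 * ((Real.exp (-2 * ρ z) : ℝ) : ℂ)
        * pairC (conjV (ψ z)) (Hopf f ρ z) * WZb (Fc f) z i
      = (starRingEnd ℂ) (WZb ψ z i
        + 2 * ((Real.exp (-2 * ρ z) : ℝ) : ℂ)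
          * pairC (ψ z) (conjV (Hopf f ρ z)) * WZ (Fc f) z i)
  rw [wirtZ_conj,
    show pairC (conjV (ψ z)) (Hopf f ρ z)
        = pairC (conjV (ψ z)) (conjV (conjV (Hopf f ρ z))) from by rw [conjV_conjV],
    ← pairC_conj, fzb_eq z i]
  simp [map_ofNat, Complex.conj_ofReal, ← Complex.exp_conj, map_neg]
  try ring
  try rfl

lemma jacobi_conj (ψ : ℂ → Fin m → ℂ) (z : ℂ) (i : Fin m) :
    Jacobi f ρ (fun w => conjV (ψ w)) z i = (starRingEnd ℂ) (Jacobi f ρ ψ z i) := by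
  have eNZ : NZ f ρ (fun w => conjV (ψ w)) = fun w => conjV (NZb f ρ ψ w) := by
    funext w j; exact CNb ψ w j
  have eNZb : NZb f ρ (fun w => conjV (ψ w)) = fun w => conjV (NZ f ρ ψ w) := by
    funext w j; exact CN ψ w j
  have e1 : NZb f ρ (NZ f ρ (fun w => conjV (ψ w))) z i
      = (starRingEnd ℂ) (NZ f ρ (NZb f ρ ψ) z i) := by
    rw [eNZ]; exact CN (NZb f ρ ψ) z i
  have e2 : NZ f ρ (NZb f ρ (fun w => conjV (ψ w))) z i
      = (starRingEnd ℂ) (NZb f ρ (NZ f ρ ψ) z i) := by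
    rw [eNZb]; exact CNb (NZ f ρ ψ) z i
  show 2 * ((Real.exp (-2 * ρ z) : ℝ) : ℂ)
        * (NZb f ρ (NZ f ρ (fun w => conjV (ψ w))) z i
          + NZ f ρ (NZb f ρ (fun w => conjV (ψ w))) z i)
      + 2 * conjV (ψ z) i
      + 4 * ((Real.exp (-4 * ρ z) : ℝ) : ℂ)
        * (pairC (conjV (ψ z)) (Hopf f ρ z) * conjV (Hopf f ρ z) i
          + pairC (conjV (ψ z)) (conjV (Hopf f ρ z)) * Hopf f ρ z i)
      = (starRingEnd ℂ) (2 * ((Real.exp (-2 * ρ z) : ℝ) : ℂ)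
          * (NZb f ρ (NZ f ρ ψ) z i + NZ f ρ (NZb f ρ ψ) z i)
        + 2 * ψ z i
        + 4 * ((Real.exp (-4 * ρ z) : ℝ) : ℂ)
          * (pairC (ψ z) (Hopf f ρ z) * conjV (Hopf f ρ z) i
            + pairC (ψ z) (conjV (Hopf f ρ z)) * Hopf f ρ z i))
  rw [e1, e2,
    show pairC (conjV (ψ z)) (Hopf f ρ z)
        = pairC (conjV (ψ z)) (conjV (conjV (Hopf f ρ z))) from by rw [conjV_conjV],
    ← pairC_conj, ← pairC_conj]
  simp [map_ofNat, Complex.conj_ofReal, conjV, ← Complex.exp_conj, map_neg]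
  try ring

lemma conj_exp_rC (t : ℂ) (ht : (starRingEnd ℂ) t = t) (z : ℂ) :
    (starRingEnd ℂ) (Complex.exp (t * rC ρ z)) = Complex.exp (t * rC ρ z) := by
  rw [← Complex.exp_conj, map_mul, ht, show (starRingEnd ℂ) (rC ρ z) = rC ρ z from
    Complex.conj_ofReal _]

lemma jacobiOmb (hf : IsConfMinImm f ρ) {a : ℝ}
    (ha : ∀ z : ℂ, pairC (Hopf f ρ z) (Hopf f ρ z) = (a : ℂ)) (z : ℂ) (i : Fin m) :
    Jacobi f ρ (fun w => conjV (Hopf f ρ w)) z i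
      = 2 * conjV (Hopf f ρ z) i
        + 8 * (a:ℂ) * Complex.exp ((-4:ℂ) * rC ρ z) * Hopf f ρ z i := by
  rw [jacobi_conj (Hopf f ρ) z i, jacobiOm hf ha z i]
  simp only [map_add, map_mul, map_ofNat, Complex.conj_ofReal, Complex.conj_conj, conjV]
  rw [conj_exp_rC (-4) (by rw [show (-4:ℂ) = ((-4:ℝ):ℂ) by norm_num, Complex.conj_ofReal]; try norm_num) z]

lemma smNZ (hf : IsConfMinImm f ρ) {ψ : ℂ → Fin m → ℂ} (hψ : SmV ψ) :
    SmV (NZ f ρ ψ) := by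
  intro i
  have e : (fun z => NZ f ρ ψ z i)
      = fun z => WZ ψ z i + 2 * Complex.exp ((-2:ℂ) * rC ρ z)
          * pairC (ψ z) (Hopf f ρ z) * WZb (Fc f) z i := by
    funext z
    show WZ ψ z i + 2 * ((Real.exp (-2 * ρ z) : ℝ) : ℂ)
        * pairC (ψ z) (Hopf f ρ z) * WZb (Fc f) z i = _
    rw [ecastm2 z]
  rw [e]
  exact (hψ.WZ' i).add (((contDiff_const.mul (smExp hf (-2))).mul
    (Sm_pairC hψ (smOm hf))).mul ((smFzb hf) i))

lemma smNZb (hf : IsConfMinImm f ρ) {ψ : ℂ → Fin m → ℂ} (hψ : SmV ψ) :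
    SmV (NZb f ρ ψ) := by
  intro i
  have e : (fun z => NZb f ρ ψ z i)
      = fun z => WZb ψ z i + 2 * Complex.exp ((-2:ℂ) * rC ρ z)
          * pairC (ψ z) (conjV (Hopf f ρ z)) * WZ (Fc f) z i := by
    funext z
    show WZb ψ z i + 2 * ((Real.exp (-2 * ρ z) : ℝ) : ℂ)
        * pairC (ψ z) (conjV (Hopf f ρ z)) * WZ (Fc f) z i = _
    rw [ecastm2 z]
  rw [e]
  exact (hψ.WZb' i).add (((contDiff_const.mul (smExp hf (-2))).mul
    (Sm_pairC hψ ((smOm hf).conj'))).mul ((smFz hf) i))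

lemma NZ_linear (hf : IsConfMinImm f ρ) {ψ φ : ℂ → Fin m → ℂ}
    (hψ : SmV ψ) (hφ : SmV φ) (s t : ℂ) (z : ℂ) (i : Fin m) :
    NZ f ρ (fun w j => s * ψ w j + t * φ w j) z i
      = s * NZ f ρ ψ z i + t * NZ f ρ φ z i := by
  have e1 : WZ (fun w j => s * ψ w j + t * φ w j) z i
      = s * WZ ψ z i + t * WZ φ z i := by
    show wirtZ (fun w => s * ψ w i + t * φ w i) z = _
    rw [wirtZ_add (contDiff_const.mul (hψ i)) (contDiff_const.mul (hφ i)) z,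
      wirtZ_const_mul (hψ i) s z, wirtZ_const_mul (hφ i) t z]
    rfl
  show WZ (fun w j => s * ψ w j + t * φ w j) z i
      + 2 * ((Real.exp (-2 * ρ z) : ℝ) : ℂ)
        * pairC (fun j => s * ψ z j + t * φ z j) (Hopf f ρ z) * WZb (Fc f) z i
      = s * (WZ ψ z i + 2 * ((Real.exp (-2 * ρ z) : ℝ) : ℂ)
          * pairC (ψ z) (Hopf f ρ z) * WZb (Fc f) z i)
        + t * (WZ φ z i + 2 * ((Real.exp (-2 * ρ z) : ℝ) : ℂ)
          * pairC (φ z) (Hopf f ρ z) * WZb (Fc f) z i)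
  rw [e1, pairC_add_left, pairC_smul_left, pairC_smul_left]
  ring

lemma NZb_linear (hf : IsConfMinImm f ρ) {ψ φ : ℂ → Fin m → ℂ}
    (hψ : SmV ψ) (hφ : SmV φ) (s t : ℂ) (z : ℂ) (i : Fin m) :
    NZb f ρ (fun w j => s * ψ w j + t * φ w j) z i
      = s * NZb f ρ ψ z i + t * NZb f ρ φ z i := by
  have e1 : WZb (fun w j => s * ψ w j + t * φ w j) z i
      = s * WZb ψ z i + t * WZb φ z i := by
    show wirtZbar (fun w => s * ψ w i + t * φ w i) z = _
    rw [wirtZbar_add (contDiff_const.mul (hψ i)) (contDiff_const.mul (hφ i)) z,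
      wirtZbar_const_mul (hψ i) s z, wirtZbar_const_mul (hφ i) t z]
    rfl
  show WZb (fun w j => s * ψ w j + t * φ w j) z i
      + 2 * ((Real.exp (-2 * ρ z) : ℝ) : ℂ)
        * pairC (fun j => s * ψ z j + t * φ z j) (conjV (Hopf f ρ z)) * WZ (Fc f) z i
      = s * (WZb ψ z i + 2 * ((Real.exp (-2 * ρ z) : ℝ) : ℂ)
          * pairC (ψ z) (conjV (Hopf f ρ z)) * WZ (Fc f) z i)
        + t * (WZb φ z i + 2 * ((Real.exp (-2 * ρ z) : ℝ) : ℂ)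
          * pairC (φ z) (conjV (Hopf f ρ z)) * WZ (Fc f) z i)
  rw [e1, pairC_add_left, pairC_smul_left, pairC_smul_left]
  ring

lemma jacobi_linear (hf : IsConfMinImm f ρ) {ψ φ : ℂ → Fin m → ℂ}
    (hψ : SmV ψ) (hφ : SmV φ) (s t : ℂ) (z : ℂ) (i : Fin m) :
    Jacobi f ρ (fun w j => s * ψ w j + t * φ w j) z i
      = s * Jacobi f ρ ψ z i + t * Jacobi f ρ φ z i := by
  have eNZ : NZ f ρ (fun w j => s * ψ w j + t * φ w j)
      = fun w j => s * NZ f ρ ψ w j + t * NZ f ρ φ w j := by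
    funext w j; exact NZ_linear hf hψ hφ s t w j
  have eNZb : NZb f ρ (fun w j => s * ψ w j + t * φ w j)
      = fun w j => s * NZb f ρ ψ w j + t * NZb f ρ φ w j := by
    funext w j; exact NZb_linear hf hψ hφ s t w j
  have e1 : NZb f ρ (NZ f ρ (fun w j => s * ψ w j + t * φ w j)) z i
      = s * NZb f ρ (NZ f ρ ψ) z i + t * NZb f ρ (NZ f ρ φ) z i := by
    rw [eNZ]; exact NZb_linear hf (smNZ hf hψ) (smNZ hf hφ) s t z i
  have e2 : NZ f ρ (NZb f ρ (fun w j => s * ψ w j + t * φ w j)) z i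
      = s * NZ f ρ (NZb f ρ ψ) z i + t * NZ f ρ (NZb f ρ φ) z i := by
    rw [eNZb]; exact NZ_linear hf (smNZb hf hψ) (smNZb hf hφ) s t z i
  show 2 * ((Real.exp (-2 * ρ z) : ℝ) : ℂ)
        * (NZb f ρ (NZ f ρ (fun w j => s * ψ w j + t * φ w j)) z i
          + NZ f ρ (NZb f ρ (fun w j => s * ψ w j + t * φ w j)) z i)
      + 2 * (s * ψ z i + t * φ z i)
      + 4 * ((Real.exp (-4 * ρ z) : ℝ) : ℂ)
        * (pairC (fun j => s * ψ z j + t * φ z j) (Hopf f ρ z) * conjV (Hopf f ρ z) i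
          + pairC (fun j => s * ψ z j + t * φ z j) (conjV (Hopf f ρ z)) * Hopf f ρ z i)
      = _
  rw [e1, e2, pairC_add_left, pairC_smul_left, pairC_smul_left,
    pairC_add_left, pairC_smul_left, pairC_smul_left]
  show _ = s * (LapPerp f ρ ψ z i + 2 * ψ z i
      + 4 * ((Real.exp (-4 * ρ z) : ℝ) : ℂ)
        * (pairC (ψ z) (Hopf f ρ z) * conjV (Hopf f ρ z) i
          + pairC (ψ z) (conjV (Hopf f ρ z)) * Hopf f ρ z i))
    + t * (LapPerp f ρ φ z i + 2 * φ z i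
      + 4 * ((Real.exp (-4 * ρ z) : ℝ) : ℂ)
        * (pairC (φ z) (Hopf f ρ z) * conjV (Hopf f ρ z) i
          + pairC (φ z) (conjV (Hopf f ρ z)) * Hopf f ρ z i))
  show _ = s * (2 * ((Real.exp (-2 * ρ z) : ℝ) : ℂ)
        * (NZb f ρ (NZ f ρ ψ) z i + NZ f ρ (NZb f ρ ψ) z i) + 2 * ψ z i
      + 4 * ((Real.exp (-4 * ρ z) : ℝ) : ℂ)
        * (pairC (ψ z) (Hopf f ρ z) * conjV (Hopf f ρ z) i
          + pairC (ψ z) (conjV (Hopf f ρ z)) * Hopf f ρ z i))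
    + t * (2 * ((Real.exp (-2 * ρ z) : ℝ) : ℂ)
        * (NZb f ρ (NZ f ρ φ) z i + NZ f ρ (NZb f ρ φ) z i) + 2 * φ z i
      + 4 * ((Real.exp (-4 * ρ z) : ℝ) : ℂ)
        * (pairC (φ z) (Hopf f ρ z) * conjV (Hopf f ρ z) i
          + pairC (φ z) (conjV (Hopf f ρ z)) * Hopf f ρ z i))
  ring

end Main4

section Final

variable {m : ℕ} {f : ℂ → Fin m → ℝ} {ρ : ℂ → ℝ}

lemma hRe_decomp : HopfRe f ρ
    = (fun w j => (1/2 : ℂ) * Hopf f ρ w j + (1/2 : ℂ) * conjV (Hopf f ρ w) j) := by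
  funext w j
  show ((Hopf f ρ w j).re : ℂ)
      = (1/2 : ℂ) * Hopf f ρ w j + (1/2 : ℂ) * (starRingEnd ℂ) (Hopf f ρ w j)
  have h := Complex.add_conj (Hopf f ρ w j)
  push_cast at h
  linear_combination -h / 2

lemma hIm_decomp : HopfIm f ρ
    = (fun w j => (-(Complex.I)/2) * Hopf f ρ w j + (Complex.I/2) * conjV (Hopf f ρ w) j) := by
  funext w j
  show ((Hopf f ρ w j).im : ℂ)
      = (-(Complex.I)/2) * Hopf f ρ w j + (Complex.I/2) * (starRingEnd ℂ) (Hopf f ρ w j)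
  have h := Complex.sub_conj (Hopf f ρ w j)
  push_cast at h
  linear_combination (Complex.I/2) * h + ((Hopf f ρ w j).im : ℂ) * Complex.I_sq

lemma hA_coeff {a : ℝ} (ha : ∀ z : ℂ, pairC (Hopf f ρ z) (Hopf f ρ z) = (a : ℂ)) (z : ℂ) :
    pairC (HopfRe f ρ z) (HopfRe f ρ z) - pairC (HopfIm f ρ z) (HopfIm f ρ z) = (a : ℂ) := by
  have e1 : pairC (HopfRe f ρ z) (HopfRe f ρ z)
      = ((∑ i, (Hopf f ρ z i).re * (Hopf f ρ z i).re : ℝ) : ℂ) := by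
    unfold pairC HopfRe
    rw [Complex.ofReal_sum]
    exact Finset.sum_congr rfl fun j _ => by push_cast; ring
  have e2 : pairC (HopfIm f ρ z) (HopfIm f ρ z)
      = ((∑ i, (Hopf f ρ z i).im * (Hopf f ρ z i).im : ℝ) : ℂ) := by
    unfold pairC HopfIm
    rw [Complex.ofReal_sum]
    exact Finset.sum_congr rfl fun j _ => by push_cast; ring
  have h0 : ∑ i, ((Hopf f ρ z i).re * (Hopf f ρ z i).re
      - (Hopf f ρ z i).im * (Hopf f ρ z i).im) = a := by
    have h := congrArg Complex.re (ha z)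
    simpa [pairC, Complex.mul_re] using h
  rw [e1, e2, ← Complex.ofReal_sub, ← Finset.sum_sub_distrib, h0]

end Final

/-- the Jacobi operator on the real and imaginary parts of the Hopf field
(equation (3.3)). -/
theorem jacobi_on_hopf_parts (n : ℕ) (hn : 3 ≤ n)
    (f : ℂ → Fin (n + 1) → ℝ) (ρ : ℂ → ℝ) (hf : IsConfMinImm f ρ)
    (a : ℝ) (ha : ∀ z : ℂ, pairC (Hopf f ρ z) (Hopf f ρ z) = (a : ℂ)) :
    ∀ (z : ℂ) (i : Fin (n + 1)),
      Jacobi f ρ (HopfRe f ρ) z i =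
        2 * (1 + 4 * (Real.exp (-4 * ρ z) : ℂ) *
          (pairC (HopfRe f ρ z) (HopfRe f ρ z) - pairC (HopfIm f ρ z) (HopfIm f ρ z)))
          * HopfRe f ρ z i ∧
      Jacobi f ρ (HopfIm f ρ) z i =
        2 * (1 - 4 * (Real.exp (-4 * ρ z) : ℂ) *
          (pairC (HopfRe f ρ z) (HopfRe f ρ z) - pairC (HopfIm f ρ z) (HopfIm f ρ z)))
          * HopfIm f ρ z i := by
  intro z i
  have hre_pt : HopfRe f ρ z i
      = (1/2 : ℂ) * Hopf f ρ z i + (1/2 : ℂ) * conjV (Hopf f ρ z) i := by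
    rw [hRe_decomp]
  have him_pt : HopfIm f ρ z i
      = (-(Complex.I)/2) * Hopf f ρ z i + (Complex.I/2) * conjV (Hopf f ρ z) i := by
    rw [hIm_decomp]
  constructor
  · rw [hA_coeff ha z]
    calc Jacobi f ρ (HopfRe f ρ) z i
        = Jacobi f ρ (fun w j => (1/2 : ℂ) * Hopf f ρ w j
            + (1/2 : ℂ) * conjV (Hopf f ρ w) j) z i := by rw [hRe_decomp]
      _ = (1/2 : ℂ) * Jacobi f ρ (Hopf f ρ) z i
            + (1/2 : ℂ) * Jacobi f ρ (fun w => conjV (Hopf f ρ w)) z i :=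
          jacobi_linear hf (smOm hf) ((smOm hf).conj') (1/2) (1/2) z i
      _ = 2 * (1 + 4 * ((Real.exp (-4 * ρ z) : ℝ) : ℂ) * (a : ℂ)) * HopfRe f ρ z i := by
          rw [jacobiOm hf ha z i, jacobiOmb hf ha z i, hre_pt, ecastm4 z]
          ring
  · rw [hA_coeff ha z]
    calc Jacobi f ρ (HopfIm f ρ) z i
        = Jacobi f ρ (fun w j => (-(Complex.I)/2) * Hopf f ρ w j
            + (Complex.I/2) * conjV (Hopf f ρ w) j) z i := by rw [hIm_decomp]
      _ = (-(Complex.I)/2) * Jacobi f ρ (Hopf f ρ) z i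
            + (Complex.I/2) * Jacobi f ρ (fun w => conjV (Hopf f ρ w)) z i :=
          jacobi_linear hf (smOm hf) ((smOm hf).conj') (-(Complex.I)/2) (Complex.I/2) z i
      _ = 2 * (1 - 4 * ((Real.exp (-4 * ρ z) : ℝ) : ℂ) * (a : ℂ)) * HopfIm f ρ z i := by
          rw [jacobiOm hf ha z i, jacobiOmb hf ha z i, him_pt, ecastm4 z]
          ring
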